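/- arXiv:1209.5313 — 5 statements merged into one kernel-verified Lean document; each statement's English description precedes it below -/
import Mathlib

section
/- For every integer k ≥ 7, r(k,3) > 2^k·ln 2, where r(k,l) = 1 / ( ((k+1)/2^k)^{l−1}·(k/2^k) + 2·√( ((k+1)/2^k)^{l−1} · (1/2^k) · (1 − ((k+1)/2^k)^l) ) ); equivalently, 2^k·(ln 2)·( ((k+1)/2^k)^2·(k/2^k) + 2·√( ((k+1)/2^k)^2·(1/2^k)·(1 − ((k+1)/2^k)^3) ) ) < 1 for all k ≥ 7. -/
/-!
With `N = 2^k` and `x = (k+1)/N`, the bound `2(k+1)^2 ≤ N` (valid for `k ≥ 7`) makes both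
summands of `N` times the denominator of `r(k,3)` small: the square-root term is at most `√2`
(drop the factor `1 - x^3`), and the polynomial term `(k+1)^2 k / N^2 ≤ k / (4(k+1)^2)` is at most
`7/256`. Hence `r(k,3) ≥ 2^k / (7/256 + √2)`, and `ln 2 · (7/256 + √2) ≈ 0.9992 < 1`.
-/

/-- The density `r(k,l)` from the paper:
`r(k,l) = 1 / ( ((k+1)/2^k)^(l-1) * (k/2^k)
  + 2 * √( ((k+1)/2^k)^(l-1) * (1/2^k) * (1 - ((k+1)/2^k)^l) ) )`. -/
noncomputable def rkl (k l : ℕ) : ℝ :=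
  1 / ( ((k + 1 : ℝ) / 2 ^ k) ^ (l - 1) * (k / 2 ^ k)
    + 2 * Real.sqrt (((k + 1 : ℝ) / 2 ^ k) ^ (l - 1) * (1 / 2 ^ k)
        * (1 - ((k + 1 : ℝ) / 2 ^ k) ^ l)) )

open Real

lemma two_mul_add_one_sq_le_two_pow {k : ℕ} (hk : 7 ≤ k) : 2 * (k + 1) ^ 2 ≤ 2 ^ k := by
  induction k, hk using Nat.le_induction with
  | base => norm_num
  | succ n hn ih => rw [pow_succ 2 n]; nlinarith

lemma mul_sq_div_mul_div_le {k N : ℝ} (hk : 7 ≤ k) (hN : 2 * (k + 1) ^ 2 ≤ N) :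
    N * (((k + 1) / N) ^ 2 * (k / N)) ≤ 7 / 256 := by
  have hN₀ : 0 < N := by nlinarith
  have hk' : 64 * k ≤ 7 * (k + 1) ^ 2 := by nlinarith
  rw [show N * (((k + 1) / N) ^ 2 * (k / N)) = (k + 1) ^ 2 * k / N ^ 2 by field_simp,
    div_le_iff₀ (by positivity)]
  nlinarith [mul_le_mul hN hN (by positivity) hN₀.le,
    mul_le_mul_of_nonneg_left hk' (sq_nonneg (k + 1))]

lemma mul_two_mul_sqrt_le_sqrt_two {N x : ℝ} (hN : 0 < N) (hx₀ : 0 ≤ x)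
    (hx : 2 * N * x ^ 2 ≤ 1) : N * (2 * √(x ^ 2 * (1 / N) * (1 - x ^ 3))) ≤ √2 := by
  have hsq : N * (2 * √(x ^ 2 * (1 / N) * (1 - x ^ 3))) = √(4 * N * x ^ 2 * (1 - x ^ 3)) := by
    rw [show 4 * N * x ^ 2 * (1 - x ^ 3) = (2 * N) ^ 2 * (x ^ 2 * (1 / N) * (1 - x ^ 3)) by
      field_simp; ring, sqrt_mul (sq_nonneg _), sqrt_sq (by positivity)]
    ring
  rw [hsq]
  apply sqrt_le_sqrt
  nlinarith [mul_nonneg (mul_nonneg hN.le (sq_nonneg x)) (pow_nonneg hx₀ 3)]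

lemma two_pow_div_le_rkl_three {k : ℕ} (hk : 7 ≤ k) : 2 ^ k / (7 / 256 + √2) ≤ rkl k 3 := by
  have hN : 2 * ((k : ℝ) + 1) ^ 2 ≤ 2 ^ k := by exact_mod_cast two_mul_add_one_sq_le_two_pow hk
  set N : ℝ := 2 ^ k
  set x : ℝ := (k + 1) / N
  have hN₀ : 0 < N := by positivity
  have hpoly : N * (x ^ 2 * (k / N)) ≤ 7 / 256 :=
    mul_sq_div_mul_div_le (by exact_mod_cast hk) hN
  have hroot : N * (2 * √(x ^ 2 * (1 / N) * (1 - x ^ 3))) ≤ √2 := by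
    refine mul_two_mul_sqrt_le_sqrt_two hN₀ (by positivity) ?_
    rw [div_pow, ← mul_div_assoc, div_le_one (by positivity)]
    nlinarith
  have hD : 0 < x ^ 2 * (k / N) + 2 * √(x ^ 2 * (1 / N) * (1 - x ^ 3)) := by
    have : 0 < x ^ 2 * (k / N) := by
      have : (0 : ℝ) < k := by exact_mod_cast (by omega : 0 < k)
      positivity
    positivity
  simp only [rkl, Nat.reduceSub]
  rw [div_le_div_iff₀ (by positivity) hD, one_mul, mul_add]
  linarith

lemma log_two_mul_lt_one : log 2 * (7 / 256 + √2) < 1 := by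
  have hsqrt : √2 < 1.41422 := by
    rw [sqrt_lt' (by norm_num)]; norm_num
  nlinarith [log_two_lt_d9, log_pos one_lt_two]

/-- For every integer `k ≥ 7`, `r(k,3) > 2^k * ln 2`. -/
theorem r_k_three_gt (k : ℕ) (hk : 7 ≤ k) :
    rkl k 3 > 2 ^ k * Real.log 2 := by
  calc 2 ^ k * log 2 < 2 ^ k / (7 / 256 + √2) := by
        rw [lt_div_iff₀ (by positivity), mul_assoc]
        exact mul_lt_of_lt_one_right (by positivity) log_two_mul_lt_one
    _ ≤ rkl k 3 := two_pow_div_le_rkl_three hk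
end

section
/- If a 2-CNF formula F contains no bicycle (of any length t ≥ 2) in its implication graph, then F is satisfiable. -/
open Finset

/-- A literal over `n` variables: a variable together with a sign (`true` = positive). -/
abbrev Lit (n : ℕ) := Fin n × Bool

/-- The negation of a literal. -/
def Lit.neg {n : ℕ} (w : Lit n) : Lit n := (w.1, !w.2)

/-- A `k`-clause over `n` variables: a set of `k` literals on `k` distinct variables. -/
abbrev Clause (n k : ℕ) :=
  {C : Finset (Lit n) // C.card = k ∧ (C.image Prod.fst).card = k}

/-- The number of positive literals in a clause. -/
def Clause.posCount {n k : ℕ} (C : Clause n k) : ℕ :=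
  (C.1.filter fun p => p.2 = true).card

/-- The 2-clause `c = (w ∨ w')` gives rise to the directed edge `a → b` of the
implication graph iff `(a, b) = (¬w, w')` or `(a, b) = (¬w', w)`,
i.e. iff `¬a ∈ c`, `b ∈ c` and `b` is not the literal `¬a` itself. -/
def EdgeFrom {n : ℕ} (c : Clause n 2) (a b : Lit n) : Prop :=
  a.neg ∈ c.1 ∧ b ∈ c.1 ∧ a.neg ≠ b

/-- The implication graph of the 2-CNF formula `F` has an edge `a → b`. -/
def ImpEdge {n : ℕ} (F : Finset (Clause n 2)) (a b : Lit n) : Prop :=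
  ∃ c ∈ F, EdgeFrom c a b

/-- `w : Fin t → Lit n` is a bicycle (of length `t ≥ 2`) in the implication graph of `F`:
a sequence of `t` literals of distinct variables forming a directed path
`w 0 → w 1 → ⋯ → w (t-1)`, together with two additional directed edges `u → w 0` and
`w (t-1) → v` for some `u, v ∈ {w 0, …, w (t-1), ¬w 0, …, ¬w (t-1)}`. -/
def IsBicycle {n t : ℕ} (F : Finset (Clause n 2)) (w : Fin t → Lit n) : Prop :=
  ∃ ht : 2 ≤ t,
    Function.Injective (fun j => (w j).1) ∧
    (∀ j : Fin t, ∀ hj : j.1 + 1 < t, ImpEdge F (w j) (w ⟨j.1 + 1, hj⟩)) ∧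
    ∃ u v : Lit n,
      (∃ j, u = w j ∨ u = (w j).neg) ∧ (∃ j, v = w j ∨ v = (w j).neg) ∧
      ImpEdge F u (w ⟨0, by omega⟩) ∧ ImpEdge F (w ⟨t - 1, by omega⟩) v

/-- The assignment `σ` satisfies the 2-CNF formula `F` (a finite set of 2-clauses). -/
def SatF {n : ℕ} (σ : Fin n → Bool) (F : Finset (Clause n 2)) : Prop :=
  ∀ c ∈ F, ∃ p ∈ c.1, σ p.1 = p.2

/-!
A bicycle-free implication graph has no infinite walk. Otherwise, the graph being finite, the walk
returns to a literal and can be run around that cycle forever in both directions, giving a walk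
`p : ℤ → Lit n`. Take a window `p i, …, p (i + t - 1)` of literals on distinct variables of maximal
length `t`: maximality puts the variables of `p (i - 1)` and `p (i + t)` among those of the window,
so the window together with the edges into and out of it is a bicycle.

Hence the implication graph is well founded and has a rank strictly decreasing along edges. Make a
literal true when its rank is at most that of its negation: a falsified clause `w ∨ w'` would give
`rk w' < rk ¬w ≤ rk w < rk ¬w' ≤ rk w'`.
-/

namespace Lit

variable {n : ℕ}

@[simp]
lemma neg_neg (w : Lit n) : w.neg.neg = w := by
  simp [Lit.neg]

lemma eq_or_eq_neg_of_fst_eq {y z : Lit n} (h : y.1 = z.1) : y = z ∨ y = z.neg := by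
  rcases y with ⟨a, _ | _⟩ <;> rcases z with ⟨b, _ | _⟩ <;> simp_all [Lit.neg]

end Lit

section ImplicationGraph

variable {n : ℕ} {F : Finset (Clause n 2)}

lemma ImpEdge.fst_ne {a b : Lit n} (h : ImpEdge F a b) : a.1 ≠ b.1 := by
  obtain ⟨c, -, hna, hb, hne⟩ := h
  have hinj : Set.InjOn Prod.fst (c.1 : Set (Lit n)) := by
    rw [← Finset.card_image_iff, c.2.1, c.2.2]
  exact fun hab => hne (hinj hna hb hab)

lemma impEdge_neg_of_mem {c : Clause n 2} (hc : c ∈ F) {a b : Lit n} (ha : a ∈ c.1)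
    (hb : b ∈ c.1) (hab : a ≠ b) : ImpEdge F a.neg b :=
  ⟨c, hc, by rwa [Lit.neg_neg], hb, by rwa [Lit.neg_neg]⟩

lemma exists_satF_of_rank_decreasing {β : Type*} [LinearOrder β] (rk : Lit n → β)
    (hrk : ∀ a b, ImpEdge F a b → rk b < rk a) : ∃ σ : Fin n → Bool, SatF σ F := by
  refine ⟨fun v => decide (rk (v, true) ≤ rk (v, false)), fun c hc => ?_⟩
  by_contra! hfalse
  have hfalse_le : ∀ w ∈ c.1, rk w.neg ≤ rk w := by
    rintro ⟨v, _ | _⟩ hw <;> have := hfalse _ hw <;> simp [Lit.neg] at this ⊢ <;> order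
  obtain ⟨a, b, hab, hcab⟩ := Finset.card_eq_two.mp c.2.1
  have ha : a ∈ c.1 := by simp [hcab]
  have hb : b ∈ c.1 := by simp [hcab]
  exact lt_irrefl (rk b) <| calc
    rk b < rk a.neg := hrk _ _ (impEdge_neg_of_mem hc ha hb hab)
    _ ≤ rk a := hfalse_le a ha
    _ < rk b.neg := hrk _ _ (impEdge_neg_of_mem hc hb ha hab.symm)
    _ ≤ rk b := hfalse_le b hb

end ImplicationGraph

lemma exists_int_walk_of_nat_walk {α : Type*} [Finite α] {r : α → α → Prop} (f : ℕ → α)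
    (hf : ∀ k, r (f k) (f (k + 1))) : ∃ g : ℤ → α, ∀ k, r (g k) (g (k + 1)) := by
  obtain ⟨i, j, hij, hfij⟩ :=
    Set.finite_univ.exists_lt_map_eq_of_forall_mem (f := f) fun _ => Set.mem_univ _
  set m : ℤ := j - i
  refine ⟨fun k => f (i + (k % m).toNat), fun k => ?_⟩
  have hm : 0 < m := by omega
  have h0 := Int.emod_nonneg k hm.ne'
  have hlt := Int.emod_lt_of_pos k hm
  show r (f (i + (k % m).toNat)) (f (i + ((k + 1) % m).toNat))
  rw [← Int.emod_add_emod k m 1]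
  rcases (show k % m + 1 < m ∨ k % m + 1 = m by omega) with h | h
  · rw [Int.emod_eq_of_lt (by omega) h]
    have : (k % m + 1).toNat = (k % m).toNat + 1 := by omega
    simpa [this, add_assoc] using hf (i + (k % m).toNat)
  · have : i + (k % m).toNat + 1 = j := by omega
    simpa [h, this, hfij] using hf (i + (k % m).toNat)

section Window

variable {n : ℕ} {F : Finset (Clause n 2)}

def windowVars (p : ℤ → Lit n) (i : ℤ) (t : ℕ) : Fin t → Fin n :=
  fun j => (p (i + (j : ℕ))).1

lemma windowVars_succ (p : ℤ → Lit n) (i : ℤ) (t : ℕ) :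
    windowVars p i (t + 1) = Fin.snoc (windowVars p i t) (p (i + t)).1 := by
  funext j
  induction j using Fin.lastCases <;> simp [windowVars]

lemma windowVars_sub_one (p : ℤ → Lit n) (i : ℤ) (t : ℕ) :
    windowVars p (i - 1) (t + 1) = Fin.cons (p (i - 1)).1 (windowVars p i t) := by
  funext j
  induction j using Fin.cases with
  | zero => simp [windowVars]
  | succ j => simp only [windowVars, Fin.cons_succ, Fin.val_succ]; push_cast; ring_nf

lemma exists_maximal_window (p : ℤ → Lit n) (h01 : (p 0).1 ≠ (p 1).1) :
    ∃ i t, 2 ≤ t ∧ (windowVars p i t).Injective ∧ ∀ i', ¬(windowVars p i' (t + 1)).Injective := by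
  classical
  have h2 : (windowVars p 0 2).Injective := by
    intro j k hjk
    fin_cases j <;> fin_cases k <;> simp_all [windowVars, eq_comm]
  have hn : 2 ≤ n := Fin.le_of_injective _ h2
  set P := fun t => ∃ i, (windowVars p i t).Injective
  obtain ⟨i, hi⟩ := Nat.findGreatest_spec (P := P) hn ⟨0, h2⟩
  refine ⟨i, Nat.findGreatest P n, Nat.le_findGreatest hn ⟨0, h2⟩, hi, fun i' hi' => ?_⟩
  exact Nat.findGreatest_is_greatest (Nat.lt_succ_self _) (Fin.le_of_injective _ hi') ⟨i', hi'⟩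

lemma exists_bicycle_of_int_walk (p : ℤ → Lit n) (hp : ∀ k, ImpEdge F (p k) (p (k + 1))) :
    ∃ t, ∃ w : Fin t → Lit n, IsBicycle F w := by
  obtain ⟨i, t, ht, hinj, hmax⟩ := exists_maximal_window p (by simpa using (hp 0).fst_ne)
  have hnext : (p (i + t)).1 ∈ Set.range (windowVars p i t) := by
    by_contra hnot
    exact hmax i (windowVars_succ p i t ▸ Fin.snoc_injective_of_injective hinj hnot)
  have hprev : (p (i - 1)).1 ∈ Set.range (windowVars p i t) := by
    by_contra hnot
    exact hmax (i - 1) (windowVars_sub_one p i t ▸ Fin.cons_injective_of_injective hnot hinj)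
  obtain ⟨jv, hjv⟩ := hnext
  obtain ⟨ju, hju⟩ := hprev
  refine ⟨t, fun j => p (i + (j : ℕ)), ht, hinj, fun j hj => ?_, p (i - 1), p (i + t),
    ⟨ju, Lit.eq_or_eq_neg_of_fst_eq hju.symm⟩, ⟨jv, Lit.eq_or_eq_neg_of_fst_eq hjv.symm⟩, ?_, ?_⟩
  · simpa [add_assoc] using hp (i + j)
  · simpa using hp (i - 1)
  · have hlast : i + ((t - 1 : ℕ) : ℤ) + 1 = i + t := by omega
    simpa [hlast] using hp (i + (t - 1 : ℕ))

end Window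

lemma wellFounded_flip_impEdge {n : ℕ} {F : Finset (Clause n 2)}
    (h : ∀ (t : ℕ) (w : Fin t → Lit n), ¬ IsBicycle F w) : WellFounded (flip (ImpEdge F)) := by
  refine ⟨fun a => by_contra fun ha => ?_⟩
  obtain ⟨f, -, hf⟩ := not_acc_iff_exists_descending_chain.mp ha
  obtain ⟨g, hg⟩ := exists_int_walk_of_nat_walk f hf
  obtain ⟨t, w, hw⟩ := exists_bicycle_of_int_walk g hg
  exact h t w hw

/-- If a 2-CNF formula `F` contains no bicycle (of any length) in its implication graph,
then `F` is satisfiable. -/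
theorem satisfiable_of_no_bicycle {n : ℕ} (F : Finset (Clause n 2))
    (h : ∀ (t : ℕ) (w : Fin t → Lit n), ¬ IsBicycle F w) :
    ∃ σ : Fin n → Bool, SatF σ F := by
  have : IsWellFounded _ (flip (ImpEdge F)) := ⟨wellFounded_flip_impEdge h⟩
  exact exists_satF_of_rank_decreasing (IsWellFounded.rank (flip (ImpEdge F)))
    fun _ _ hab => IsWellFounded.rank_lt_of_rel hab
end

section
/- Let F be a 2-CNF formula and suppose w_1 → w_2 → ⋯ → w_L is a directed path in the implication graph of F, each edge arising from a distinct clause of F, and let i be the number of indices 1 ≤ j ≤ L−1 at which the sign of w_{j+1} differs from the sign of w_j (a literal's sign is positive if it is an unnegated variable, negative otherwise). Then exactly L−1−i of the L−1 clauses giving the edges of the path have exactly one positive literal, the other i clauses each have two positive or zero positive literals, and at least ⌊i/2⌋ of those i clauses have zero positive literals. -/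
open Finset

/-
A clause yielding the edge `a → b` is exactly `{¬a, b}`, so it has
`[a negative] + [b positive]` positive literals: one when `a` and `b` have the same sign,
two on a rise (negative to positive) and zero on a fall (positive to negative). Along the
path rises and falls alternate, so there is at most one more rise than falls, and at least
half of the `i` sign changes are falls.
-/

namespace EdgeFrom

variable {n : ℕ} {C : Clause n 2} {a b : Lit n}

theorem clause_eq (h : EdgeFrom C a b) : C.1 = {a.neg, b} := by
  obtain ⟨ha, hb, hne⟩ := h
  refine (eq_of_subset_of_card_le (insert_subset ha (singleton_subset_iff.2 hb)) ?_).symm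
  rw [C.2.1, card_pair hne]

theorem posCount_eq (h : EdgeFrom C a b) : C.posCount = (!a.2).toNat + b.2.toNat := by
  have hne : a.neg ≠ b := h.2.2
  rw [Clause.posCount, h.clause_eq, filter_insert, filter_singleton]
  rcases a with ⟨av, _ | _⟩ <;> rcases b with ⟨bv, _ | _⟩ <;>
    simp_all [Lit.neg, card_insert_of_notMem]

end EdgeFrom

section SignChanges

variable (s : ℕ → Bool)

theorem card_rises_add_eq_card_falls_add (m : ℕ) :
    #{j ∈ range m | s j = false ∧ s (j + 1) = true} + (s 0).toNat =
      #{j ∈ range m | s j = true ∧ s (j + 1) = false} + (s m).toNat := by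
  induction m with
  | zero => simp
  | succ m ih =>
    rw [range_add_one, filter_insert, filter_insert]
    rcases hm : s m <;> rcases hm1 : s (m + 1) <;>
      simp [hm, hm1, card_insert_of_notMem] at ih ⊢ <;> omega

theorem card_signChanges_eq_card_rises_add_card_falls (m : ℕ) :
    #{j ∈ range m | s (j + 1) ≠ s j} =
      #{j ∈ range m | s j = false ∧ s (j + 1) = true} +
        #{j ∈ range m | s j = true ∧ s (j + 1) = false} := by
  rw [← card_union_of_disjoint (disjoint_filter.2 fun j _ hr hf ↦ by simp_all), ← filter_or]
  refine congrArg card (filter_congr fun j _ ↦ ?_)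
  cases s j <;> cases s (j + 1) <;> simp

theorem card_signChanges_div_two_le_card_falls (m : ℕ) :
    #{j ∈ range m | s (j + 1) ≠ s j} / 2 ≤ #{j ∈ range m | s j = true ∧ s (j + 1) = false} := by
  have hbal := card_rises_add_eq_card_falls_add s m
  rw [card_signChanges_eq_card_rises_add_card_falls]
  have := Bool.toNat_le (s m)
  omega

end SignChanges

theorem path_sign_change_clause_count_general {n L : ℕ}
    (w : ℕ → Lit n) (c : ℕ → Clause n 2)
    (hedge : ∀ j < L - 1, EdgeFrom (c j) (w j) (w (j + 1)))
    (i : ℕ)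
    (hi : i = ((Finset.range (L - 1)).filter fun j => (w (j + 1)).2 ≠ (w j).2).card) :
    ((Finset.range (L - 1)).filter fun j => (c j).posCount = 1).card = L - 1 - i ∧
    (∀ j < L - 1, (c j).posCount ≠ 1 → (c j).posCount = 0 ∨ (c j).posCount = 2) ∧
    i / 2 ≤ ((Finset.range (L - 1)).filter fun j => (c j).posCount = 0).card := by
  have hpos (j : ℕ) (hj : j ∈ range (L - 1)) :
      (c j).posCount = (!(w j).2).toNat + (w (j + 1)).2.toNat :=
    (hedge j (mem_range.1 hj)).posCount_eq
  have hone : #{j ∈ range (L - 1) | (c j).posCount = 1} =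
      #{j ∈ range (L - 1) | ¬(w (j + 1)).2 ≠ (w j).2} := by
    refine congrArg card (filter_congr fun j hj ↦ ?_)
    rw [hpos j hj]; cases (w j).2 <;> cases (w (j + 1)).2 <;> simp
  have hzero : #{j ∈ range (L - 1) | (c j).posCount = 0} =
      #{j ∈ range (L - 1) | (w j).2 = true ∧ (w (j + 1)).2 = false} := by
    refine congrArg card (filter_congr fun j hj ↦ ?_)
    rw [hpos j hj]; cases (w j).2 <;> cases (w (j + 1)).2 <;> simp
  refine ⟨?_, fun j hj ↦ ?_, ?_⟩
  · have := card_filter_add_card_filter_not (s := range (L - 1))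
      (fun j ↦ (w (j + 1)).2 ≠ (w j).2)
    rw [card_range] at this
    omega
  · rw [hpos j (mem_range.2 hj)]
    cases (w j).2 <;> cases (w (j + 1)).2 <;> simp
  · rw [hzero, hi]
    exact card_signChanges_div_two_le_card_falls (fun j ↦ (w j).2) (L - 1)

/-- Suppose `w 0 → w 1 → ⋯ → w (L-1)` is a directed path in the implication graph of the
2-CNF formula `F`, the edge `w j → w (j+1)` arising from the clause `c j ∈ F`, the clauses
`c 0, …, c (L-2)` being pairwise distinct.  Let `i` be the number of indices
`j ≤ L - 2` at which the sign of `w (j+1)` differs from the sign of `w j`.  Then exactly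
`L - 1 - i` of the `L - 1` clauses of the path have exactly one positive literal, the other
`i` clauses each have two or zero positive literals, and at least `⌊i/2⌋` of those `i`
clauses have zero positive literals. -/
theorem path_sign_change_clause_count {n L : ℕ} (F : Finset (Clause n 2))
    (w : ℕ → Lit n) (c : ℕ → Clause n 2)
    (hmem : ∀ j < L - 1, c j ∈ F)
    (hdist : Set.InjOn c (Set.Iio (L - 1)))
    (hedge : ∀ j < L - 1, EdgeFrom (c j) (w j) (w (j + 1)))
    (i : ℕ)
    (hi : i = ((Finset.range (L - 1)).filter fun j => (w (j + 1)).2 ≠ (w j).2).card) :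
    ((Finset.range (L - 1)).filter fun j => (c j).posCount = 1).card = L - 1 - i ∧
    (∀ j < L - 1, (c j).posCount ≠ 1 → (c j).posCount = 0 ∨ (c j).posCount = 2) ∧
    i / 2 ≤ ((Finset.range (L - 1)).filter fun j => (c j).posCount = 0).card :=
  path_sign_change_clause_count_general w c hedge i hi
end

section
/- Consider the random 2-CNF formula F̄ on n variables in which each of the C(n,2) clauses with two positive literals is present independently with probability q_2 = 2p_2 r/n, each of the n(n−1) clauses with one positive and one negative literal is present independently with probability q_1 = p_1 r/n, and each of the C(n,2) clauses with two negative literals is present independently with probability q_0 = 2p_0 r/n, where r > 0 and p_0, p_1, p_2 > 0 with p_0 ≤ p_2. Let Y_L denote the number of sequences of L literals on L distinct variables forming a directed path in the implication graph of F̄. Then E[Y_L] ≤ 2n·√(p_2/p_0)·( r·(p_1 + 2√(p_0 p_2)) )^{L−1}. -/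
/-!
By linearity of expectation, `E[Y_L]` is a sum over sequences `w` of literals on distinct
variables of the probability that all clauses `¬w_j ∨ w_{j+1}` are present. These clauses are
distinct, so the probability is a product of entries `Q (sign w_j) (sign w_{j+1})` of a `2 × 2`
transfer matrix `Q`; forgetting the variables costs a factor `n ^ L`. The vector `e` with
`e(neg) = √(p2/p0)`, `e(pos) = 1` satisfies `Q e = λ e` for `λ = r (p1 + 2 √(p0 p2)) / n`, and
`1 ≤ e` because `p0 ≤ p2`; hence every walk sum of length `L - 1` is at most
`λ ^ (L - 1) (1 + √(p2/p0)) ≤ 2 √(p2/p0) λ ^ (L - 1)`.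
-/

open Finset

/-- The inclusion probability of a 2-clause: `q2` for a clause with two positive literals,
`q1` for a clause with one positive and one negative literal, and `q0` for a clause with
two negative literals. -/
noncomputable def clauseProb {n : ℕ} (q0 q1 q2 : ℝ) (c : Clause n 2) : ℝ :=
  if c.posCount = 2 then q2 else if c.posCount = 1 then q1 else q0

/-- The probability, under independent inclusion of each 2-clause `c` with probability
`clauseProb q0 q1 q2 c`, that the resulting random 2-CNF formula is exactly `F`. -/
noncomputable def formulaWeight {n : ℕ} (q0 q1 q2 : ℝ) (F : Finset (Clause n 2)) : ℝ :=
  (∏ c ∈ F, clauseProb q0 q1 q2 c) * ∏ c ∈ Fᶜ, (1 - clauseProb q0 q1 q2 c)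

/-- The number of sequences of `L` literals on `L` distinct variables forming a directed
path in the implication graph of `F`. -/
noncomputable def pathCount (n L : ℕ) (F : Finset (Clause n 2)) : ℕ :=
  Nat.card {w : Fin L → Lit n //
    Function.Injective (fun j => (w j).1) ∧
    ∀ j : Fin L, ∀ hj : j.1 + 1 < L, ImpEdge F (w j) (w ⟨j.1 + 1, hj⟩)}

theorem Fintype.sum_ite_subset_prod_mul_prod_compl {α R : Type*} [Fintype α] [DecidableEq α]
    [CommRing R] (p : α → R) (S : Finset α) :
    ∑ F : Finset α, (if S ⊆ F then (∏ c ∈ F, p c) * ∏ c ∈ Fᶜ, (1 - p c) else 0) =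
      ∏ c ∈ S, p c := by
  -- expand `∏ c, (p c + [c ∉ S] (1 - p c))` over the subsets `F` of chosen `p`-factors
  have hexpand := Fintype.prod_add p fun c => if c ∉ S then 1 - p c else 0
  have hfactor : ∀ c, p c + (if c ∉ S then 1 - p c else 0) = if c ∈ S then p c else 1 := by
    intro c; split_ifs <;> ring
  simp only [hfactor, prod_ite_mem] at hexpand
  rw [hexpand]
  refine Finset.sum_congr rfl fun F _ => ?_
  simp only [Finset.prod_ite_zero, mul_ite, mul_zero]
  refine if_congr ?_ rfl rfl
  simp only [mem_compl, not_imp_not, subset_iff]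

theorem Fintype.sum_comp_snd {ι A B R : Type*} [Fintype ι] [DecidableEq ι] [Fintype A]
    [Fintype B] [CommSemiring R] (g : (ι → B) → R) :
    ∑ w : ι → A × B, g (fun i => (w i).2) =
      (Fintype.card A : R) ^ Fintype.card ι * ∑ s, g s := by
  rw [← (Equiv.arrowProdEquivProdArrow ι (fun _ => A) (fun _ => B)).symm.sum_comp,
    Fintype.sum_prod_type]
  simp

theorem Fin.forall_val_succ_lt_iff {M : ℕ} {P : Fin (M + 1) → Fin (M + 1) → Prop} :
    (∀ j : Fin (M + 1), ∀ hj : j.1 + 1 < M + 1, P j ⟨j.1 + 1, hj⟩) ↔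
      ∀ j : Fin M, P j.castSucc j.succ :=
  ⟨fun h j => h j.castSucc (by simp), fun h j hj => h ⟨j, by omega⟩⟩

section Transfer

open Matrix

variable {β R : Type*} [CommSemiring R]

def walkWeight (Q : Matrix β β R) {M : ℕ} (s : Fin (M + 1) → β) : R :=
  ∏ j : Fin M, Q (s j.castSucc) (s j.succ)

variable {Q : Matrix β β R}

theorem walkWeight_snoc {M : ℕ} (s : Fin (M + 1) → β) (b : β) :
    walkWeight Q (Fin.snoc s b : Fin (M + 2) → β) = walkWeight Q s * Q (s (Fin.last M)) b := by
  simp only [walkWeight, Fin.prod_univ_castSucc, Fin.succ_castSucc, Fin.snoc_castSucc,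
    Fin.snoc_last, Fin.succ_last]

variable [PartialOrder R] [IsOrderedRing R] (hQ : ∀ a b, 0 ≤ Q a b)
include hQ

theorem walkWeight_nonneg {M : ℕ} (s : Fin (M + 1) → β) : 0 ≤ walkWeight Q s :=
  prod_nonneg fun _ _ => hQ _ _

variable [Fintype β] {e : β → R} {c : R} (hc : 0 ≤ c) (he : Q *ᵥ e ≤ c • e)
include hc he

theorem sum_walkWeight_mul_le (M : ℕ) :
    ∑ s : Fin (M + 1) → β, walkWeight Q s * e (s (Fin.last M)) ≤ c ^ M * ∑ a, e a := by
  induction M with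
  | zero => simpa [walkWeight] using ((Equiv.funUnique (Fin 1) β).sum_comp e).le
  | succ M ih =>
    rw [← (Fin.snocEquiv fun _ => β).sum_comp, Fintype.sum_prod_type_right]
    simp only [Fin.snocEquiv_apply, Fin.snoc_last]
    calc ∑ s : Fin (M + 1) → β, ∑ b, walkWeight Q (Fin.snoc s b : Fin (M + 2) → β) * e b
        = ∑ s : Fin (M + 1) → β, walkWeight Q s * (Q *ᵥ e) (s (Fin.last M)) := by
          simp only [walkWeight_snoc, mul_assoc, ← mul_sum]
          rfl
      _ ≤ ∑ s : Fin (M + 1) → β, walkWeight Q s * (c * e (s (Fin.last M))) :=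
          sum_le_sum fun s _ => mul_le_mul_of_nonneg_left (he _) (walkWeight_nonneg hQ s)
      _ ≤ c ^ (M + 1) * ∑ a, e a := by
          simp only [mul_left_comm _ c, ← mul_sum, pow_succ', mul_assoc]
          exact mul_le_mul_of_nonneg_left ih hc

theorem sum_walkWeight_le (he1 : ∀ a, 1 ≤ e a) (M : ℕ) :
    ∑ s : Fin (M + 1) → β, walkWeight Q s ≤ c ^ M * ∑ a, e a :=
  (sum_le_sum fun s _ => le_mul_of_one_le_right (walkWeight_nonneg hQ s) (he1 _)).trans
    (sum_walkWeight_mul_le hQ hc he M)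

end Transfer

@[simp] theorem Lit.neg_fst {n : ℕ} (a : Lit n) : a.neg.1 = a.1 := rfl

section EdgeClause

variable {n : ℕ} {a b : Lit n}

theorem Lit.neg_ne_of_fst_ne (h : a.1 ≠ b.1) : a.neg ≠ b :=
  fun hab => h (congrArg Prod.fst hab : a.neg.1 = b.1)

def edgeClause (a b : Lit n) (h : a.1 ≠ b.1) : Clause n 2 :=
  ⟨{a.neg, b}, card_pair (Lit.neg_ne_of_fst_ne h), by simp [image_insert, card_pair h]⟩

theorem fst_image_edgeClause (h : a.1 ≠ b.1) :
    (edgeClause a b h).1.image Prod.fst = {a.1, b.1} := by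
  simp [edgeClause, image_insert]

theorem edgeFrom_iff_eq_edgeClause {c : Clause n 2} (h : a.1 ≠ b.1) :
    EdgeFrom c a b ↔ c = edgeClause a b h := by
  constructor
  · rintro ⟨ha, hb, -⟩
    refine Subtype.ext (eq_of_subset_of_card_le ?_ ?_).symm
    · exact insert_subset ha (singleton_subset_iff.2 hb)
    · rw [c.2.1, (edgeClause a b h).2.1]
  · rintro rfl
    exact ⟨mem_insert_self _ _, mem_insert_of_mem (mem_singleton_self _),
      Lit.neg_ne_of_fst_ne h⟩

theorem impEdge_iff_edgeClause_mem {F : Finset (Clause n 2)} (h : a.1 ≠ b.1) :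
    ImpEdge F a b ↔ edgeClause a b h ∈ F := by
  simp only [ImpEdge, edgeFrom_iff_eq_edgeClause h, exists_eq_right]

/-- The edge `a → b` comes from the clause `¬a ∨ b`, with `(!a.2) + b.2` positive literals. -/
def edgeProb (q0 q1 q2 : ℝ) : Matrix Bool Bool ℝ
  | false, true => q2
  | true, false => q0
  | _, _ => q1

theorem clauseProb_edgeClause (q0 q1 q2 : ℝ) (h : a.1 ≠ b.1) :
    clauseProb q0 q1 q2 (edgeClause a b h) = edgeProb q0 q1 q2 a.2 b.2 := by
  obtain ⟨u, sa⟩ := a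
  obtain ⟨v, sb⟩ := b
  have huv : u ≠ v := h
  cases sa <;> cases sb <;>
    simp [clauseProb, Clause.posCount, edgeClause, edgeProb, Lit.neg, filter_insert,
      filter_singleton, huv]

end EdgeClause

section Path

variable {n M : ℕ} {w : Fin (M + 1) → Lit n} (hw : Function.Injective fun j => (w j).1)
include hw

theorem fst_castSucc_ne_fst_succ (j : Fin M) : (w j.castSucc).1 ≠ (w j.succ).1 :=
  fun h => Fin.castSucc_lt_succ.ne (hw h)

def pathClauses : Finset (Clause n 2) :=
  univ.image fun j : Fin M =>
    edgeClause (w j.castSucc) (w j.succ) (fst_castSucc_ne_fst_succ hw j)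

theorem edgeClause_injective :
    Function.Injective fun j : Fin M =>
      edgeClause (w j.castSucc) (w j.succ) (fst_castSucc_ne_fst_succ hw j) := by
  intro j k hjk
  have hvar := congrArg (fun c : Clause n 2 => c.1.image Prod.fst) hjk
  simp only [fst_image_edgeClause] at hvar
  have hpair : ({j.castSucc, j.succ} : Finset (Fin (M + 1))) = {k.castSucc, k.succ} :=
    image_injective hw (by simpa [image_insert] using hvar)
  have hj := hpair ▸ mem_insert_self j.castSucc {j.succ}
  have hk := hpair.symm ▸ mem_insert_self k.castSucc {k.succ}
  simp only [mem_insert, mem_singleton, Fin.ext_iff, Fin.val_castSucc, Fin.val_succ] at hj hk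
  exact Fin.ext (by omega)

theorem forall_impEdge_iff_pathClauses_subset (F : Finset (Clause n 2)) :
    (∀ j : Fin (M + 1), ∀ hj : j.1 + 1 < M + 1, ImpEdge F (w j) (w ⟨j.1 + 1, hj⟩)) ↔
      pathClauses hw ⊆ F := by
  refine (Fin.forall_val_succ_lt_iff (P := fun a b => ImpEdge F (w a) (w b))).trans ?_
  simp [pathClauses, image_subset_iff,
    impEdge_iff_edgeClause_mem (fst_castSucc_ne_fst_succ hw _)]

theorem sum_formulaWeight_of_pathClauses_subset (q0 q1 q2 : ℝ) :
    ∑ F, (if pathClauses hw ⊆ F then formulaWeight q0 q1 q2 F else 0) =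
      walkWeight (edgeProb q0 q1 q2) fun j => (w j).2 := by
  simp only [formulaWeight]
  rw [Fintype.sum_ite_subset_prod_mul_prod_compl, pathClauses,
    prod_image (edgeClause_injective hw).injOn]
  simp [clauseProb_edgeClause, walkWeight]

end Path

def IsLitPath {n L : ℕ} (F : Finset (Clause n 2)) (w : Fin L → Lit n) : Prop :=
  Function.Injective (fun j => (w j).1) ∧
    ∀ j : Fin L, ∀ hj : j.1 + 1 < L, ImpEdge F (w j) (w ⟨j.1 + 1, hj⟩)

section FirstMoment

open scoped Classical

theorem pathCount_eq_sum_ite (n L : ℕ) (F : Finset (Clause n 2)) :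
    (pathCount n L F : ℝ) = ∑ w : Fin L → Lit n, if IsLitPath F w then 1 else 0 := by
  rw [pathCount, Nat.card_eq_fintype_card, Fintype.card_subtype, natCast_card_filter]
  congr! 2

theorem pathCount_zero (n : ℕ) (F : Finset (Clause n 2)) : pathCount n 0 F = 1 := by
  simp [pathCount, Function.injective_of_subsingleton]

theorem sum_formulaWeight (n : ℕ) (q0 q1 q2 : ℝ) :
    ∑ F : Finset (Clause n 2), formulaWeight q0 q1 q2 F = 1 := by
  simpa [formulaWeight] using
    Fintype.sum_ite_subset_prod_mul_prod_compl (clauseProb q0 q1 q2) ∅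

variable {n M : ℕ} {q0 q1 q2 : ℝ} (hq : ∀ a b, 0 ≤ edgeProb q0 q1 q2 a b)
include hq

theorem sum_formulaWeight_mul_ite_isLitPath_le (w : Fin (M + 1) → Lit n) :
    ∑ F, formulaWeight q0 q1 q2 F * (if IsLitPath F w then 1 else 0) ≤
      walkWeight (edgeProb q0 q1 q2) fun j => (w j).2 := by
  by_cases hw : Function.Injective fun j => (w j).1
  · simp only [mul_ite, mul_one, mul_zero, IsLitPath, hw, true_and,
      forall_impEdge_iff_pathClauses_subset hw]
    exact (sum_formulaWeight_of_pathClauses_subset hw q0 q1 q2).le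
  · simpa [IsLitPath, hw] using walkWeight_nonneg hq _

theorem sum_formulaWeight_mul_pathCount_le :
    ∑ F, formulaWeight q0 q1 q2 F * (pathCount n (M + 1) F : ℝ) ≤
      (n : ℝ) ^ (M + 1) * ∑ s : Fin (M + 1) → Bool, walkWeight (edgeProb q0 q1 q2) s :=
  calc ∑ F, formulaWeight q0 q1 q2 F * (pathCount n (M + 1) F : ℝ)
      = ∑ w : Fin (M + 1) → Lit n,
          ∑ F, formulaWeight q0 q1 q2 F * (if IsLitPath F w then 1 else 0) := by
        simp only [pathCount_eq_sum_ite, mul_sum]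
        exact sum_comm
    _ ≤ ∑ w : Fin (M + 1) → Lit n, walkWeight (edgeProb q0 q1 q2) fun j => (w j).2 :=
        sum_le_sum fun w _ => sum_formulaWeight_mul_ite_isLitPath_le hq w
    _ = _ := by simp [Fintype.sum_comp_snd]

end FirstMoment

open Matrix in
theorem edgeProb_mulVec_eq_smul {p0 p1 p2 r x : ℝ} (hp0 : 0 < p0) (hp2 : 0 ≤ p2) :
    edgeProb (2 * p0 * r / x) (p1 * r / x) (2 * p2 * r / x) *ᵥ
        (fun b => if b then 1 else √(p2 / p0)) =
      (r * (p1 + 2 * √(p0 * p2)) / x) • fun b => if b then 1 else √(p2 / p0) := by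
  have hσ : √(p0 * p2) = p0 * √(p2 / p0) := by
    rw [show p0 * p2 = p0 ^ 2 * (p2 / p0) by field_simp, Real.sqrt_mul (sq_nonneg _),
      Real.sqrt_sq hp0.le]
  have hσ2 : p0 * √(p2 / p0) ^ 2 = p2 := by
    rw [Real.sq_sqrt (div_nonneg hp2 hp0.le)]
    field_simp
  ext b
  cases b <;> simp only [mulVec, dotProduct, Fintype.sum_bool, edgeProb, hσ, Pi.smul_apply,
    smul_eq_mul, if_true, if_false, Bool.false_eq_true]
  · linear_combination (-(2 * r / x)) * hσ2
  · ring

theorem expected_path_count_le_general (n L : ℕ) (hn : 0 < n) (p0 p1 p2 r : ℝ)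
    (hp0 : 0 < p0) (hp1 : 0 < p1) (hp2 : 0 < p2) (hp02 : p0 ≤ p2) (hr : 0 < r) :
    ∑ F : Finset (Clause n 2),
        formulaWeight (2 * p0 * r / n) (p1 * r / n) (2 * p2 * r / n) F * (pathCount n L F : ℝ)
      ≤ 2 * n * Real.sqrt (p2 / p0) * (r * (p1 + 2 * Real.sqrt (p0 * p2))) ^ (L - 1) := by
  have hn' : (1 : ℝ) ≤ n := by exact_mod_cast hn
  have hσ : 1 ≤ √(p2 / p0) := Real.one_le_sqrt.2 ((one_le_div hp0).2 hp02)
  cases L with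
  | zero =>
    simp only [pathCount_zero, Nat.cast_one, mul_one, sum_formulaWeight]
    nlinarith
  | succ M =>
    have hq : ∀ a b, 0 ≤ edgeProb (2 * p0 * r / n) (p1 * r / n) (2 * p2 * r / n) a b := by
      intro a b
      cases a <;> cases b <;> simp only [edgeProb] <;> positivity
    have he1 : ∀ b : Bool, 1 ≤ if b then 1 else √(p2 / p0) := by
      intro b; cases b <;> simp [hσ]
    calc _ ≤ (n : ℝ) ^ (M + 1) *
            ((r * (p1 + 2 * √(p0 * p2)) / n) ^ M * (1 + √(p2 / p0))) := by
          refine (sum_formulaWeight_mul_pathCount_le hq).trans ?_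
          gcongr
          simpa using sum_walkWeight_le hq (by positivity)
            (edgeProb_mulVec_eq_smul hp0 hp2.le).le he1 M
      _ = n * (r * (p1 + 2 * √(p0 * p2))) ^ M * (1 + √(p2 / p0)) := by
          rw [div_pow, pow_succ]
          field_simp
      _ ≤ n * (r * (p1 + 2 * √(p0 * p2))) ^ M * (2 * √(p2 / p0)) := by
          gcongr
          linarith
      _ = _ := by
          rw [Nat.add_sub_cancel]
          ring

/-- In the random 2-CNF formula on `n` variables where each clause with two positive
literals is present independently with probability `q2 = 2 p2 r / n`, each clause with one
positive literal with probability `q1 = p1 r / n`, and each clause with two negative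
literals with probability `q0 = 2 p0 r / n`, the expected number `E[Y_L]` of directed paths
of `L` literals on distinct variables in the implication graph satisfies
`E[Y_L] ≤ 2 n √(p2/p0) (r (p1 + 2 √(p0 p2)))^(L-1)`. -/
theorem expected_path_count_le (n L : ℕ) (hn : 0 < n) (p0 p1 p2 r : ℝ)
    (hp0 : 0 < p0) (hp1 : 0 < p1) (hp2 : 0 < p2) (hp02 : p0 ≤ p2) (hr : 0 < r)
    (hq0 : 2 * p0 * r / n ≤ 1) (hq1 : p1 * r / n ≤ 1) (hq2 : 2 * p2 * r / n ≤ 1) :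
    ∑ F : Finset (Clause n 2),
        formulaWeight (2 * p0 * r / n) (p1 * r / n) (2 * p2 * r / n) F * (pathCount n L F : ℝ)
      ≤ 2 * n * Real.sqrt (p2 / p0) * (r * (p1 + 2 * Real.sqrt (p0 * p2))) ^ (L - 1) :=
  expected_path_count_le_general n L hn p0 p1 p2 r hp0 hp1 hp2 hp02 hr
end

section
/- Fix ε > 0 and an integer k ≥ 2, and let m = ⌈(2^k·ln 2 + ε)·n⌉. A random k-SAT formula consisting of m clauses drawn independently and uniformly at random (with replacement) from the C(n,k)·2^k possible k-clauses is unsatisfiable with probability tending to 1 as n → ∞. -/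
open Finset Filter

/-- The assignment `σ` satisfies the clause `C`. -/
def Sat {n k : ℕ} (σ : Fin n → Bool) (C : Clause n k) : Prop :=
  ∃ p ∈ C.1, σ p.1 = p.2

/-- A formula (a finite sequence of clauses) is satisfiable. -/
def Satisfiable {n k m : ℕ} (Φ : Fin m → Clause n k) : Prop :=
  ∃ σ : Fin n → Bool, ∀ i, Sat σ (Φ i)

/-- The Achlioptas rule: select the first among the first `l - 1` presented clauses
containing at least two positive literals; if there is none, select the `l`-th clause. -/
def select {n k l : ℕ} (hl : 0 < l) (cs : Fin l → Clause n k) : Clause n k :=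
  match (List.finRange l).find? (fun i => decide (i.1 + 1 < l ∧ 2 ≤ (cs i).posCount)) with
  | some i => cs i
  | none => cs ⟨l - 1, Nat.sub_lt hl one_pos⟩

/-- The probability of the event `P` under the uniform distribution on the finite type `α`;
in particular, for `α = Fin m → Fin l → Clause n k` this is the probability that `P` holds
for `m` rounds of `l` clauses drawn independently and uniformly at random with replacement. -/
noncomputable def unifProb {α : Type*} [Fintype α] (P : α → Prop) : ℝ :=
  (Nat.card {a // P a} : ℝ) / (Fintype.card α : ℝ)

/-!
First moment method. A fixed assignment satisfies a uniformly random `k`-clause with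
probability `1 - 2^{-k}` (it falsifies exactly one of the `2^k` sign patterns on each set of
`k` variables), hence satisfies `m` independent clauses with probability `(1 - 2^{-k})^m`.
A union bound over the `2^n` assignments gives
`P(satisfiable) ≤ 2^n (1 - 2^{-k})^m ≤ exp(n ln 2 - 2^{-k} m) ≤ exp(-2^{-k} ε n) → 0`.
-/

section unifProb

variable {α : Type*} [Fintype α]

lemma unifProb_nonneg (P : α → Prop) : 0 ≤ unifProb P := by
  unfold unifProb; positivity

lemma unifProb_not [Nonempty α] (P : α → Prop) : unifProb (fun a => ¬ P a) = 1 - unifProb P := by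
  classical
  have hα : (Fintype.card α : ℝ) ≠ 0 := by positivity
  have hcompl := Fintype.card_subtype_compl P
  have hle := Fintype.card_subtype_le P
  simp only [unifProb, Nat.card_eq_fintype_card, hcompl]
  rw [Nat.cast_sub hle, sub_div, div_self hα]

lemma unifProb_exists_le {ι : Type*} [Fintype ι] (Q : ι → α → Prop) :
    unifProb (fun a => ∃ i, Q i a) ≤ ∑ i, unifProb (Q i) := by
  classical
  simp only [unifProb, ← Finset.sum_div, Nat.card_eq_fintype_card, Fintype.card_subtype]
  gcongr
  calc (#{a | ∃ i, Q i a} : ℝ) = #(univ.biUnion fun i => {a | Q i a}) := by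
        congr 2; ext a; simp
    _ ≤ ∑ i, (#{a | Q i a} : ℝ) := by exact_mod_cast card_biUnion_le

lemma unifProb_forall_pi {ι : Type*} [Fintype ι] [DecidableEq ι] (P : α → Prop) :
    unifProb (fun f : ι → α => ∀ i, P (f i)) = unifProb P ^ Fintype.card ι := by
  have hcard : Nat.card {f : ι → α // ∀ i, P (f i)} = Nat.card {a // P a} ^ Fintype.card ι := by
    rw [Nat.card_congr (Equiv.subtypePiEquivPi (p := fun _ a => P a)), Nat.card_fun,
      Nat.card_eq_fintype_card (α := ι)]
  simp only [unifProb, hcard, Fintype.card_fun, Nat.cast_pow, div_pow]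

end unifProb

namespace Clause

variable {n k : ℕ}

def vars (C : Clause n k) : Finset (Fin n) := C.1.image Prod.fst

def sign (C : Clause n k) (a : Fin n) : Bool := decide ((a, true) ∈ C.1)

lemma card_vars (C : Clause n k) : C.vars.card = k := C.2.2

lemma mem_iff (C : Clause n k) {a : Fin n} {b : Bool} :
    (a, b) ∈ C.1 ↔ a ∈ C.vars ∧ C.sign a = b := by
  have hinj : Set.InjOn Prod.fst (C.1 : Set (Lit n)) :=
    Finset.card_image_iff.mp (C.2.2.trans C.2.1.symm)
  have hsign : ∀ {b}, (a, b) ∈ C.1 → C.sign a = b := fun {b} hb => by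
    cases b
    · have ht : (a, true) ∉ C.1 := fun ht => by simpa using hinj ht hb rfl
      simpa [sign] using ht
    · simpa [sign] using hb
  refine ⟨fun h => ⟨mem_image_of_mem _ h, hsign h⟩, ?_⟩
  rintro ⟨ha, rfl⟩
  obtain ⟨⟨a, b⟩, hb, rfl⟩ := mem_image.mp ha
  rwa [hsign hb]

lemma sat_iff (σ : Fin n → Bool) (C : Clause n k) : Sat σ C ↔ ∃ a ∈ C.vars, σ a = C.sign a := by
  simp [Sat, C.mem_iff, eq_comm]

def ofSigns {s : Finset (Fin n)} (hs : s.card = k) (g : s → Bool) : Clause n k :=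
  ⟨s.attach.image fun i => (i.1, g i), by
    refine ⟨?_, by simpa [image_image, Function.comp_def]⟩
    rw [card_image_of_injective _ fun _ _ h => Subtype.ext (congrArg Prod.fst h), card_attach, hs]⟩

section ofSigns

variable {s : Finset (Fin n)} (hs : s.card = k) (g : s → Bool)

lemma mem_ofSigns {a : Fin n} {b : Bool} :
    (a, b) ∈ (ofSigns hs g).1 ↔ ∃ h : a ∈ s, g ⟨a, h⟩ = b := by
  simp [ofSigns]

lemma vars_ofSigns : (ofSigns hs g).vars = s := by
  ext a
  simp [vars, mem_ofSigns]

lemma sign_ofSigns (i : s) : (ofSigns hs g).sign i = g i := by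
  simp [sign, mem_ofSigns]

end ofSigns

lemma ofSigns_eq {C : Clause n k} (g : C.vars → Bool) (hg : ∀ i, g i = C.sign i) :
    ofSigns C.card_vars g = C := by
  ext ⟨a, b⟩
  simp [mem_ofSigns, C.mem_iff, hg]

def varsFiberEquiv {s : Finset (Fin n)} (hs : s.card = k) :
    {C : Clause n k // C.vars = s} ≃ (s → Bool) where
  toFun C i := C.1.sign i
  invFun g := ⟨ofSigns hs g, vars_ofSigns hs g⟩
  left_inv := by
    rintro ⟨C, rfl⟩
    exact Subtype.ext (ofSigns_eq _ fun _ => rfl)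
  right_inv g := funext (sign_ofSigns hs g)

theorem card_eq_choose_mul_two_pow (n k : ℕ) :
    Fintype.card (Clause n k) = n.choose k * 2 ^ k := by
  classical
  rw [← card_univ, card_eq_sum_card_fiberwise (f := vars) (t := powersetCard k univ)
    fun C _ => mem_powersetCard_univ.mpr C.card_vars]
  calc ∑ s ∈ powersetCard k univ, #{C : Clause n k | C.vars = s}
      = ∑ s ∈ powersetCard k univ, 2 ^ k := sum_congr rfl fun s hs => by
        have hs : s.card = k := mem_powersetCard_univ.mp hs
        rw [← Fintype.card_subtype, Fintype.card_congr (varsFiberEquiv hs)]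
        simp [hs]
    _ = n.choose k * 2 ^ k := by simp

lemma nonempty_of_le (hkn : k ≤ n) : Nonempty (Clause n k) :=
  Fintype.card_pos_iff.mp <| by
    rw [card_eq_choose_mul_two_pow]
    have := Nat.choose_pos hkn
    positivity

lemma not_sat_iff (σ : Fin n → Bool) (C : Clause n k) :
    ¬ Sat σ C ↔ ∀ a ∈ C.vars, C.sign a = !σ a := by
  simp only [sat_iff, not_exists, not_and]
  refine forall₂_congr fun a _ => ?_
  cases σ a <;> cases C.sign a <;> simp

theorem card_not_sat (σ : Fin n → Bool) :
    Nat.card {C : Clause n k // ¬ Sat σ C} = n.choose k := by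
  classical
  have hchoose : (powersetCard k (univ : Finset (Fin n))).card = n.choose k := by simp
  rw [Nat.card_eq_fintype_card, Fintype.card_subtype, ← hchoose]
  refine card_bij' (fun C _ => C.vars)
    (fun s hs => ofSigns (mem_powersetCard_univ.mp hs) fun i => !σ i) ?_ ?_ ?_ ?_
  · exact fun C _ => mem_powersetCard_univ.mpr C.card_vars
  · intro s hs
    simp only [mem_filter, mem_univ, true_and, not_sat_iff, vars_ofSigns]
    exact fun a ha => sign_ofSigns _ _ ⟨a, ha⟩
  · intro C hC
    simp only [mem_filter, mem_univ, true_and, not_sat_iff] at hC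
    exact ofSigns_eq _ fun i => (hC i i.2).symm
  · exact fun s _ => vars_ofSigns _ _

end Clause

lemma unifProb_sat {n k : ℕ} (hkn : k ≤ n) (σ : Fin n → Bool) :
    unifProb (Sat (k := k) σ) = 1 - ((2 : ℝ) ^ k)⁻¹ := by
  have := Clause.nonempty_of_le hkn
  have hnot : unifProb (fun C : Clause n k => ¬ Sat σ C) = ((2 : ℝ) ^ k)⁻¹ := by
    have := Nat.choose_pos hkn
    rw [unifProb, Clause.card_not_sat, Clause.card_eq_choose_mul_two_pow]
    push_cast
    field_simp
  linarith [unifProb_not (Sat (k := k) σ)]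

theorem unifProb_satisfiable_le {n k : ℕ} (hkn : k ≤ n) (m : ℕ) :
    unifProb (Satisfiable : (Fin m → Clause n k) → Prop) ≤ 2 ^ n * (1 - ((2 : ℝ) ^ k)⁻¹) ^ m :=
  calc unifProb (Satisfiable : (Fin m → Clause n k) → Prop)
      ≤ ∑ σ : Fin n → Bool, unifProb fun Φ : Fin m → Clause n k => ∀ i, Sat σ (Φ i) :=
        unifProb_exists_le _
    _ = 2 ^ n * (1 - ((2 : ℝ) ^ k)⁻¹) ^ m := by
        simp [unifProb_forall_pi, unifProb_sat hkn]

lemma tendsto_pow_mul_one_sub_pow_ceil {a p c : ℝ} (ha : 0 < a) (hp₀ : 0 ≤ p) (hp₁ : p ≤ 1)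
    (hc : Real.log a < c * p) :
    Tendsto (fun n : ℕ => a ^ n * (1 - p) ^ ⌈c * n⌉₊) atTop (nhds 0) := by
  have hbound : ∀ n : ℕ, a ^ n * (1 - p) ^ ⌈c * n⌉₊ ≤ Real.exp ((Real.log a - c * p) * n) := by
    intro n
    calc a ^ n * (1 - p) ^ ⌈c * n⌉₊
        ≤ Real.exp (Real.log a) ^ n * Real.exp (-p) ^ ⌈c * n⌉₊ := by
          rw [Real.exp_log ha]
          gcongr
          linarith [Real.add_one_le_exp (-p)]
      _ = Real.exp (n * Real.log a - p * ⌈c * n⌉₊) := by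
          rw [← Real.exp_nat_mul, ← Real.exp_nat_mul, ← Real.exp_add]
          ring_nf
      _ ≤ Real.exp ((Real.log a - c * p) * n) := by
          gcongr
          nlinarith [Nat.le_ceil (c * n)]
  have hexp : Tendsto (fun n : ℕ => Real.exp ((Real.log a - c * p) * n)) atTop (nhds 0) :=
    Real.tendsto_exp_atBot.comp
      (tendsto_natCast_atTop_atTop.const_mul_atTop_of_neg (by linarith))
  exact squeeze_zero (fun n => by positivity) hbound hexp

theorem random_ksat_first_moment_unsat_general (k : ℕ) (ε : ℝ) (hε : 0 < ε) :
    Tendsto (fun n : ℕ =>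
        unifProb (fun Φ : Fin (⌈((2 : ℝ) ^ k * Real.log 2 + ε) * n⌉₊) → Clause n k =>
          ¬ Satisfiable Φ))
      atTop (nhds 1) := by
  set c : ℝ := (2 : ℝ) ^ k * Real.log 2 + ε with hc
  have hp : 0 < ((2 : ℝ) ^ k)⁻¹ := by positivity
  have hdecay : Tendsto (fun n : ℕ => (2 : ℝ) ^ n * (1 - ((2 : ℝ) ^ k)⁻¹) ^ ⌈c * n⌉₊)
      atTop (nhds 0) := by
    refine tendsto_pow_mul_one_sub_pow_ceil two_pos hp.le
      (inv_le_one_of_one_le₀ (one_le_pow₀ one_le_two)) ?_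
    have hcp : c * ((2 : ℝ) ^ k)⁻¹ = Real.log 2 + ε * ((2 : ℝ) ^ k)⁻¹ := by
      rw [hc]; field_simp
    linarith [mul_pos hε hp]
  have hsat : Tendsto (fun n : ℕ => unifProb (Satisfiable : (Fin ⌈c * n⌉₊ → Clause n k) → Prop))
      atTop (nhds 0) :=
    squeeze_zero' (.of_forall fun _ => unifProb_nonneg _)
      ((eventually_ge_atTop k).mono fun n hkn => unifProb_satisfiable_le hkn _) hdecay
  have hcompl : ∀ᶠ n : ℕ in atTop, 1 - unifProb (Satisfiable : (Fin ⌈c * n⌉₊ → Clause n k) → Prop)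
      = unifProb (fun Φ : Fin ⌈c * n⌉₊ → Clause n k => ¬ Satisfiable Φ) :=
    (eventually_ge_atTop k).mono fun n hkn => by
      have := Clause.nonempty_of_le hkn
      exact (unifProb_not _).symm
  simpa using (tendsto_const_nhds.sub hsat).congr' hcompl

/-- For `k ≥ 2` and `ε > 0`, a random `k`-SAT formula of `⌈(2^k * ln 2 + ε) * n⌉` clauses
drawn independently and uniformly at random (with replacement) is unsatisfiable with
probability tending to `1` as `n → ∞`. -/
theorem random_ksat_first_moment_unsat (k : ℕ) (hk : 2 ≤ k) (ε : ℝ) (hε : 0 < ε) :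
    Tendsto (fun n : ℕ =>
        unifProb (fun Φ : Fin (⌈((2 : ℝ) ^ k * Real.log 2 + ε) * n⌉₊) → Clause n k =>
          ¬ Satisfiable Φ))
      atTop (nhds 1) :=
  random_ksat_first_moment_unsat_general k ε hε
end
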